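/- arXiv:2206.03034 — 5 statements merged into one kernel-verified Lean document; each statement's English description precedes it below -/
import Mathlib

section
/- Let P be a probability distribution on ℝ with finite first moment and cdf F_P, let N_1,…,N_q be i.i.d. with law P, and define EI_q^↑(P, z) = E[(max(N_1,…,N_q) − z)₊]. Then for all real a ≤ b and q ≥ 1: ∫_a^b F_P(u)^q du = (b − a) + EI_q^↑(P, b) − EI_q^↑(P, a). -/
/-!
The coordinates being i.i.d., `F_P(u) ^ q` is the cdf of `M = max(N_1, …, N_q)`. Integrating
`1{M ≤ u}` over `u ∈ (a, b]` gives `max(b, M) - max(a, M) = (b - a) + (M - b)₊ - (M - a)₊`,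
so the identity follows from Fubini's theorem; the first moment of `P` makes `M`, hence both
positive parts, integrable.
-/

open MeasureTheory Set

namespace MeasureTheory

theorem Integrable.iSup_fintype {Ω ι : Type*} [MeasurableSpace Ω] {μ : Measure Ω} [Fintype ι]
    [Nonempty ι] {f : ι → Ω → ℝ} (hf : ∀ i, Integrable (f i) μ) :
    Integrable (fun ω => ⨆ i, f i ω) μ := by
  have hsup : (fun ω => ⨆ i, f i ω) = Finset.univ.sup' Finset.univ_nonempty f := by
    ext ω
    rw [Finset.sup'_apply, Finset.sup'_univ_eq_ciSup]
  rw [hsup]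
  exact Finset.sup'_induction (p := fun g => Integrable g μ) _ _
    (fun _ hg _ hh => hg.sup hh) fun i _ => hf i

theorem Measure.pi_setOf_iSup_le {ι : Type*} [Fintype ι] [Nonempty ι] (μ : Measure ℝ)
    [SigmaFinite μ] (u : ℝ) :
    Measure.pi (fun _ : ι => μ) {y | ⨆ i, y i ≤ u} = μ (Iic u) ^ Fintype.card ι := by
  have hset : {y : ι → ℝ | ⨆ i, y i ≤ u} = univ.pi fun _ => Iic u := by
    ext y
    simp only [mem_ofPred_eq, ciSup_le_iff (Finite.bddAbove_range y), mem_pi, mem_univ, mem_Iic,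
      true_implies]
  rw [hset, Measure.pi_pi, Finset.prod_const, Finset.card_univ]

theorem volume_real_Ici_inter_Ioc {a b : ℝ} (hab : a ≤ b) (x : ℝ) :
    volume.real (Ici x ∩ Ioc a b) = max b x - max a x := by
  have hae : (Ici x ∩ Ioc a b : Set ℝ) =ᵐ[volume] (Ioc (max a x) b : Set ℝ) := by
    have hIoi : Ioi x ∩ Ioc a b = Ioc (max a x) b := by
      ext u
      simp only [mem_inter_iff, mem_Ioi, mem_Ioc, max_lt_iff]
      tauto
    exact hIoi ▸ Ioi_ae_eq_Ici.symm.inter (ae_eq_refl _)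
  rw [measureReal_congr hae, Real.volume_real_Ioc]
  simp only [max_def]
  split_ifs <;> linarith

section Fubini

variable {Ω : Type*} [MeasurableSpace Ω] (ν : Measure Ω) [IsFiniteMeasure ν] {X : Ω → ℝ}

theorem setIntegral_Ioc_measureReal_le (hX : Measurable X) {a b : ℝ} (hab : a ≤ b) :
    ∫ u in Ioc a b, ν.real {ω | X ω ≤ u} = ∫ ω, (max b (X ω) - max a (X ω)) ∂ν := by
  set S : Set (ℝ × Ω) := {p | X p.2 ≤ p.1}
  have hS : MeasurableSet S := measurableSet_le (hX.comp measurable_snd) measurable_fst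
  calc ∫ u in Ioc a b, ν.real {ω | X ω ≤ u}
      = ∫ u in Ioc a b, ∫ ω, S.indicator (fun _ => (1 : ℝ)) (u, ω) ∂ν := by
        refine setIntegral_congr_fun measurableSet_Ioc fun u _ => ?_
        rw [← integral_indicator_one (measurableSet_le hX measurable_const)]
        rfl
    _ = ∫ ω, (∫ u in Ioc a b, S.indicator (fun _ => (1 : ℝ)) (u, ω)) ∂ν :=
        integral_integral_swap ((integrable_const 1).indicator hS)
    _ = ∫ ω, (max b (X ω) - max a (X ω)) ∂ν := by
        refine integral_congr_ae (ae_of_all _ fun ω => ?_)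
        dsimp only
        rw [← volume_real_Ici_inter_Ioc hab, ← measureReal_restrict_apply measurableSet_Ici,
          ← integral_indicator_one measurableSet_Ici]
        rfl

theorem intervalIntegral_measureReal_le (hX : Measurable X) (a b : ℝ) :
    ∫ u in a..b, ν.real {ω | X ω ≤ u} = ∫ ω, (max b (X ω) - max a (X ω)) ∂ν := by
  wlog hab : a ≤ b generalizing a b
  · rw [intervalIntegral.integral_symm, this b a (le_of_not_ge hab), ← integral_neg]
    simp only [neg_sub]
  rw [intervalIntegral.integral_of_le hab, setIntegral_Ioc_measureReal_le ν hX hab]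

end Fubini

theorem integral_max_sub_max {Ω : Type*} [MeasurableSpace Ω] {ν : Measure Ω}
    [IsProbabilityMeasure ν] {f : Ω → ℝ} (hf : Integrable f ν) (a b : ℝ) :
    ∫ ω, (max b (f ω) - max a (f ω)) ∂ν
      = (b - a) + ∫ ω, max (f ω - b) 0 ∂ν - ∫ ω, max (f ω - a) 0 ∂ν := by
  have hpos : ∀ c, Integrable (fun ω => max (f ω - c) 0) ν :=
    fun c => (hf.sub (integrable_const c)).pos_part
  have hsplit : ∀ c x : ℝ, max c x = c + max (x - c) 0 := by
    intro c x
    rcases le_total c x with h | h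
    · simp [h]
    · simp [h, sub_nonpos.mpr h]
  simp only [hsplit a, hsplit b, add_sub_add_comm]
  rw [integral_add (integrable_const _) (by exact (hpos b).sub (hpos a)),
    integral_sub (hpos b) (hpos a), integral_const, probReal_univ, one_smul, add_sub_assoc]

end MeasureTheory

theorem stmt5_general (P : Measure ℝ) [IsProbabilityMeasure P]
    (hmom : Integrable (fun x : ℝ => x) P)
    (q : ℕ) (hq : 1 ≤ q) (a b : ℝ) :
    (∫ u in a..b, ((P (Set.Iic u)).toReal) ^ q) =
      (b - a)
      + (∫ y : Fin q → ℝ, max ((⨆ i, y i) - b) 0 ∂(Measure.pi fun _ => P))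
      - (∫ y : Fin q → ℝ, max ((⨆ i, y i) - a) 0 ∂(Measure.pi fun _ => P)) := by
  have : Nonempty (Fin q) := ⟨⟨0, hq⟩⟩
  have hcdf : ∀ u, (P (Iic u)).toReal ^ q
      = (Measure.pi fun _ => P).real {y : Fin q → ℝ | ⨆ i, y i ≤ u} := by
    intro u
    rw [measureReal_def, Measure.pi_setOf_iSup_le, Fintype.card_fin, ENNReal.toReal_pow]
  simp only [hcdf]
  rw [intervalIntegral_measureReal_le _ (Measurable.iSup measurable_pi_apply),
    integral_max_sub_max (Integrable.iSup_fintype fun _ => integrable_eval hmom)]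

/-- for a probability measure `P` on `ℝ` with finite first moment, with
`EI_q^↑(P,z) = E[(max(N_1,…,N_q) − z)₊]` for `N_i` i.i.d. `P`, and any `a ≤ b`, `q ≥ 1`:
`∫_a^b F_P(u)^q du = (b − a) + EI_q^↑(P,b) − EI_q^↑(P,a)`. -/
theorem stmt5 (P : Measure ℝ) [IsProbabilityMeasure P]
    (hmom : Integrable (fun x : ℝ => x) P)
    (q : ℕ) (hq : 1 ≤ q) (a b : ℝ) (hab : a ≤ b) :
    (∫ u in a..b, ((P (Set.Iic u)).toReal) ^ q) =
      (b - a)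
      + (∫ y : Fin q → ℝ, max ((⨆ i, y i) - b) 0 ∂(Measure.pi fun _ => P))
      - (∫ y : Fin q → ℝ, max ((⨆ i, y i) - a) 0 ∂(Measure.pi fun _ => P)) :=
  stmt5_general P hmom q hq a b
end

section
/- Let P be a probability distribution on ℝ with cdf F_P, let a ≤ b be real, and define the truncated CRPS S(P, z) = ∫_a^b (F_P(u) − 1_{z ≤ u})² du and R_q(a,b) = ∫_a^b F_P(u)^q du. Then for all z ∈ ℝ: S(P, z) = (b − max(a,z))₊ + R_2(a, b) − 2 R_1(max(a,z), b), where R_1(c,b) is interpreted as 0 when c > b. -/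
/-!
Expanding the square gives `(F - 1_{z ≤ ·})² = F² + 1_{z ≤ ·} (1 - 2F)`; on `[a, b]` the
indicator restricts the second integral to `[a ∨ z, b]`, whose length is `(b - a ∨ z)₊`.
The cdf and its square are monotone, hence integrable on `[a, b]`.
-/

open MeasureTheory Set ProbabilityTheory

lemma sq_sub_ite_one_zero (x : ℝ) (p : Prop) [Decidable p] :
    (x - if p then 1 else 0) ^ 2 = x ^ 2 + if p then 1 - 2 * x else 0 := by
  split_ifs <;> ring

lemma Icc_inter_Ici_eq_Icc_max (a b z : ℝ) : Icc a b ∩ Ici z = Icc (max a z) b := by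
  ext u
  simp only [mem_inter_iff, mem_Icc, mem_Ici, max_le_iff]
  tauto

lemma setIntegral_Icc_ite_le (f : ℝ → ℝ) (a b z : ℝ) :
    ∫ u in Icc a b, (if z ≤ u then f u else 0) = ∫ u in Icc (max a z) b, f u := by
  rw [← Icc_inter_Ici_eq_Icc_max, ← setIntegral_indicator measurableSet_Ici]
  rfl

lemma setIntegral_Icc_sq_sub_ite_le {F : ℝ → ℝ} {a b : ℝ}
    (hF : IntegrableOn F (Icc a b)) (hF2 : IntegrableOn (fun u => F u ^ 2) (Icc a b)) (z : ℝ) :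
    ∫ u in Icc a b, (F u - if z ≤ u then 1 else 0) ^ 2 =
      max (b - max a z) 0 + (∫ u in Icc a b, F u ^ 2) - 2 * ∫ u in Icc (max a z) b, F u := by
  have hsub : Icc (max a z) b ⊆ Icc a b := Icc_subset_Icc_left (le_max_left a z)
  have hF' : IntegrableOn F (Icc (max a z) b) := hF.mono_set hsub
  have hone : ∀ c d : ℝ, IntegrableOn (fun _ => (1 : ℝ)) (Icc c d) := fun _ _ =>
    integrableOn_const measure_Icc_lt_top.ne
  have hind : IntegrableOn (fun u => if z ≤ u then 1 - 2 * F u else 0) (Icc a b) :=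
    (((hone a b).sub (hF.const_mul 2)).indicator measurableSet_Ici).congr_fun
      (fun _ _ => rfl) measurableSet_Icc
  simp only [sq_sub_ite_one_zero]
  rw [integral_add hF2 hind, setIntegral_Icc_ite_le,
    integral_sub (hone _ b) (hF'.const_mul 2),
    integral_const_mul, setIntegral_const, smul_eq_mul, mul_one, Real.volume_real_Icc]
  ring

theorem stmt6_general (P : Measure ℝ) [IsProbabilityMeasure P] (a b : ℝ) (z : ℝ) :
    (∫ u in Set.Icc a b,
        ((P (Set.Iic u)).toReal - (if z ≤ u then (1 : ℝ) else 0)) ^ 2) =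
      max (b - max a z) 0
      + (∫ u in Set.Icc a b, ((P (Set.Iic u)).toReal) ^ 2)
      - 2 * (∫ u in Set.Icc (max a z) b, (P (Set.Iic u)).toReal) := by
  have hmono : Monotone fun u => cdf P u ^ 2 := fun u v huv =>
    pow_le_pow_left₀ (cdf_nonneg P u) (monotone_cdf P huv) 2
  simp only [← measureReal_def, ← cdf_eq_real]
  exact setIntegral_Icc_sq_sub_ite_le
    ((monotone_cdf P).locallyIntegrable.integrableOn_isCompact isCompact_Icc)
    (hmono.locallyIntegrable.integrableOn_isCompact isCompact_Icc) z

/-- decomposition of the truncated CRPS with finite endpoints `a ≤ b`: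
`S(P,z) = (b − a∨z)₊ + R₂(a,b) − 2 R₁(a∨z, b)`, where `S(P,z) = ∫_a^b (F_P(u) − 1_{z≤u})² du`
and `R_q(c,b) = ∫_{[c,b]} F_P(u)^q du` (which is `0` when `c > b`). -/
theorem stmt6 (P : Measure ℝ) [IsProbabilityMeasure P] (a b : ℝ) (hab : a ≤ b) (z : ℝ) :
    (∫ u in Set.Icc a b,
        ((P (Set.Iic u)).toReal - (if z ≤ u then (1 : ℝ) else 0)) ^ 2) =
      max (b - max a z) 0
      + (∫ u in Set.Icc a b, ((P (Set.Iic u)).toReal) ^ 2)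
      - 2 * (∫ u in Set.Icc (max a z) b, (P (Set.Iic u)).toReal) :=
  stmt6_general P a b z
end

section
/- Let Q ⊆ ℝ be a Borel set and let P_1, P_2 be probability distributions on ℝ with cdfs F_1, F_2 such that u ↦ (F_1(u) − 1_{z≤u})² is integrable over Q for P_2-almost every z, with integrable expectation. Define S(P, z) = ∫_Q (F_P(u) − 1_{z ≤ u})² du and S(P_1, P_2) = E_{Z∼P_2}[S(P_1, Z)]. Then S(P_1, P_2) − S(P_2, P_2) = ∫_Q (F_1(u) − F_2(u))² du ≥ 0; in particular the truncated CRPS is a proper scoring rule. -/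
/-!
For a fixed threshold `u`, the indicator `1_{Z ≤ u}` with `Z ∼ P₂` is a Bernoulli variable with
mean `F₂(u)`, so the expected Brier score of a forecast `a` for it is
`(a - F₂(u))² + F₂(u) (1 - F₂(u))`. Exchanging the integrals over `z` and `u` by Fubini, the
difference of the two expected scores is the integral over `Q` of the difference of these
Brier scores at `a = F₁(u)` and `a = F₂(u)`, which is `(F₁(u) - F₂(u))²`.
-/

open MeasureTheory ProbabilityTheory Set

section Fubini

variable {α β : Type*} [MeasurableSpace α] [MeasurableSpace β] {μ : Measure α} {ν : Measure β}

lemma integrable_prod_of_nonneg [SFinite ν] {f : α × β → ℝ}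
    (hf : AEStronglyMeasurable f (μ.prod ν)) (hf₀ : 0 ≤ f)
    (h_ae : ∀ᵐ x ∂μ, Integrable (fun y => f (x, y)) ν)
    (h_int : Integrable (fun x => ∫ y, f (x, y) ∂ν) μ) :
    Integrable f (μ.prod ν) := by
  refine (integrable_prod_iff hf).2 ⟨h_ae, h_int.congr (ae_of_all _ fun x => ?_)⟩
  simp only [Real.norm_of_nonneg (hf₀ (x, _))]

end Fubini

section BrierScore

variable {Ω : Type*} {s : Set Ω}

lemma sq_sub_indicator_one (a : ℝ) (z : Ω) :
    (a - s.indicator 1 z) ^ 2 = a ^ 2 - (2 * a - 1) * s.indicator 1 z := by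
  by_cases hz : z ∈ s
  · simp only [indicator_of_mem hz, Pi.one_apply]
    ring
  · simp only [indicator_of_notMem hz]
    ring

variable [MeasurableSpace Ω] (P : Measure Ω) [IsProbabilityMeasure P]

lemma integrable_sq_sub_indicator_one (hs : MeasurableSet s) (a : ℝ) :
    Integrable (fun z => (a - s.indicator 1 z) ^ 2) P := by
  simp_rw [sq_sub_indicator_one]
  exact (integrable_const _).sub (((integrable_const 1).indicator hs).const_mul _)

lemma integral_sq_sub_indicator_one (hs : MeasurableSet s) (a : ℝ) :
    ∫ z, (a - s.indicator 1 z) ^ 2 ∂P = (a - P.real s) ^ 2 + P.real s * (1 - P.real s) := by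
  simp_rw [sq_sub_indicator_one]
  rw [integral_sub (integrable_const _) (((integrable_const 1).indicator hs).const_mul _),
    integral_const, integral_const_mul, integral_indicator_one hs]
  simp only [probReal_univ, smul_eq_mul, one_mul]
  ring

lemma integral_sq_sub_indicator_one_sub (hs : MeasurableSet s) (a : ℝ) :
    ∫ z, ((a - s.indicator 1 z) ^ 2 - (P.real s - s.indicator 1 z) ^ 2) ∂P
      = (a - P.real s) ^ 2 := by
  rw [integral_sub (integrable_sq_sub_indicator_one P hs a)
      (integrable_sq_sub_indicator_one P hs _), integral_sq_sub_indicator_one P hs,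
    integral_sq_sub_indicator_one P hs]
  ring

end BrierScore

lemma measurable_sq_sub_step {F : ℝ → ℝ} (hF : Measurable F) :
    Measurable fun p : ℝ × ℝ => (F p.2 - if p.1 ≤ p.2 then (1 : ℝ) else 0) ^ 2 := by
  have h_step_meas : Measurable fun p : ℝ × ℝ => if p.1 ≤ p.2 then (1 : ℝ) else 0 :=
    Measurable.ite (measurableSet_le measurable_fst measurable_snd) measurable_const
      measurable_const
  exact ((hF.comp measurable_snd).sub h_step_meas).pow_const 2

lemma integral_integral_sq_sub_step_sub_cdf (P : Measure ℝ) [IsProbabilityMeasure P]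
    {ν : Measure ℝ} [SFinite ν] {F : ℝ → ℝ} (hF : Measurable F)
    (hF_ae : ∀ᵐ z ∂P, Integrable (fun u => (F u - if z ≤ u then (1 : ℝ) else 0) ^ 2) ν)
    (hF_int : Integrable (fun z => ∫ u, (F u - if z ≤ u then (1 : ℝ) else 0) ^ 2 ∂ν) P)
    (hP_ae : ∀ᵐ z ∂P, Integrable (fun u => (cdf P u - if z ≤ u then (1 : ℝ) else 0) ^ 2) ν)
    (hP_int : Integrable
      (fun z => ∫ u, (cdf P u - if z ≤ u then (1 : ℝ) else 0) ^ 2 ∂ν) P) :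
    (∫ z, ∫ u, (F u - if z ≤ u then (1 : ℝ) else 0) ^ 2 ∂ν ∂P)
      - (∫ z, ∫ u, (cdf P u - if z ≤ u then (1 : ℝ) else 0) ^ 2 ∂ν ∂P)
      = ∫ u, (F u - cdf P u) ^ 2 ∂ν := by
  have hF_prod := integrable_prod_of_nonneg (measurable_sq_sub_step hF).aestronglyMeasurable
    (fun _ => sq_nonneg _) hF_ae hF_int
  have hP_prod := integrable_prod_of_nonneg
    (measurable_sq_sub_step (cdf P).mono.measurable).aestronglyMeasurable
    (fun _ => sq_nonneg _) hP_ae hP_int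
  have h_step : ∀ z u : ℝ, (if z ≤ u then (1 : ℝ) else 0) = (Iic u).indicator 1 z := by
    intro z u
    simp only [indicator_apply, mem_Iic, Pi.one_apply]
  rw [← integral_sub hF_int hP_int]
  calc ∫ z, ((∫ u, (F u - if z ≤ u then (1 : ℝ) else 0) ^ 2 ∂ν)
          - ∫ u, (cdf P u - if z ≤ u then (1 : ℝ) else 0) ^ 2 ∂ν) ∂P
      = ∫ z, ∫ u, ((F u - if z ≤ u then (1 : ℝ) else 0) ^ 2
          - (cdf P u - if z ≤ u then (1 : ℝ) else 0) ^ 2) ∂ν ∂P := by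
        refine integral_congr_ae ?_
        filter_upwards [hF_ae, hP_ae] with z hFz hPz
        exact (integral_sub hFz hPz).symm
    _ = ∫ u, ∫ z, ((F u - if z ≤ u then (1 : ℝ) else 0) ^ 2
          - (cdf P u - if z ≤ u then (1 : ℝ) else 0) ^ 2) ∂P ∂ν :=
        integral_integral_swap (by exact hF_prod.sub hP_prod)
    _ = ∫ u, (F u - cdf P u) ^ 2 ∂ν := by
        simp_rw [h_step, cdf_eq_real]
        exact integral_congr_ae (ae_of_all _ fun u =>
          integral_sq_sub_indicator_one_sub P measurableSet_Iic (F u))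

theorem stmt7_general (Q : Set ℝ)
    (P₁ P₂ : Measure ℝ) [IsProbabilityMeasure P₁] [IsProbabilityMeasure P₂]
    (F₁ F₂ : ℝ → ℝ)
    (hF₁ : ∀ u, F₁ u = (P₁ (Set.Iic u)).toReal) (hF₂ : ∀ u, F₂ u = (P₂ (Set.Iic u)).toReal)
    (hi₁ : ∀ᵐ z ∂P₂,
      IntegrableOn (fun u => (F₁ u - (if z ≤ u then (1 : ℝ) else 0)) ^ 2) Q volume)
    (hi₁' : Integrable
      (fun z => ∫ u in Q, (F₁ u - (if z ≤ u then (1 : ℝ) else 0)) ^ 2) P₂)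
    (hi₂ : ∀ᵐ z ∂P₂,
      IntegrableOn (fun u => (F₂ u - (if z ≤ u then (1 : ℝ) else 0)) ^ 2) Q volume)
    (hi₂' : Integrable
      (fun z => ∫ u in Q, (F₂ u - (if z ≤ u then (1 : ℝ) else 0)) ^ 2) P₂) :
    (∫ z, (∫ u in Q, (F₁ u - (if z ≤ u then (1 : ℝ) else 0)) ^ 2) ∂P₂)
      - (∫ z, (∫ u in Q, (F₂ u - (if z ≤ u then (1 : ℝ) else 0)) ^ 2) ∂P₂)
      = ∫ u in Q, (F₁ u - F₂ u) ^ 2 ∧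
    0 ≤ ∫ u in Q, (F₁ u - F₂ u) ^ 2 := by
  obtain rfl : F₁ = cdf P₁ := funext fun u => by rw [hF₁, cdf_eq_real, measureReal_def]
  obtain rfl : F₂ = cdf P₂ := funext fun u => by rw [hF₂, cdf_eq_real, measureReal_def]
  exact ⟨integral_integral_sq_sub_step_sub_cdf P₂ (cdf P₁).mono.measurable hi₁ hi₁' hi₂ hi₂',
    integral_nonneg fun _ => sq_nonneg _⟩

/-- propriety of the truncated CRPS. For Borel `Q ⊆ ℝ` and probability measures
`P₁, P₂` with cdfs `F₁, F₂`, under the stated integrability assumptions,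
`S(P₁,P₂) − S(P₂,P₂) = ∫_Q (F₁ − F₂)² ≥ 0`, where `S(P,z) = ∫_Q (F_P(u) − 1_{z≤u})² du` and
`S(P,P₂) = E_{Z∼P₂} S(P,Z)`. -/
theorem stmt7 (Q : Set ℝ) (hQ : MeasurableSet Q)
    (P₁ P₂ : Measure ℝ) [IsProbabilityMeasure P₁] [IsProbabilityMeasure P₂]
    (F₁ F₂ : ℝ → ℝ)
    (hF₁ : ∀ u, F₁ u = (P₁ (Set.Iic u)).toReal) (hF₂ : ∀ u, F₂ u = (P₂ (Set.Iic u)).toReal)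
    (hi₁ : ∀ᵐ z ∂P₂,
      IntegrableOn (fun u => (F₁ u - (if z ≤ u then (1 : ℝ) else 0)) ^ 2) Q volume)
    (hi₁' : Integrable
      (fun z => ∫ u in Q, (F₁ u - (if z ≤ u then (1 : ℝ) else 0)) ^ 2) P₂)
    (hi₂ : ∀ᵐ z ∂P₂,
      IntegrableOn (fun u => (F₂ u - (if z ≤ u then (1 : ℝ) else 0)) ^ 2) Q volume)
    (hi₂' : Integrable
      (fun z => ∫ u in Q, (F₂ u - (if z ≤ u then (1 : ℝ) else 0)) ^ 2) P₂) :
    (∫ z, (∫ u in Q, (F₁ u - (if z ≤ u then (1 : ℝ) else 0)) ^ 2) ∂P₂)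
      - (∫ z, (∫ u in Q, (F₂ u - (if z ≤ u then (1 : ℝ) else 0)) ^ 2) ∂P₂)
      = ∫ u in Q, (F₁ u - F₂ u) ^ 2 ∧
    0 ≤ ∫ u in Q, (F₁ u - F₂ u) ^ 2 :=
  stmt7_general Q P₁ P₂ F₁ F₂ hF₁ hF₂ hi₁ hi₁' hi₂ hi₂'
end

section
/- If Q ⊆ ℝ is a Borel set with nonempty interior, and P_1 = N(μ_1, σ_1²), P_2 = N(μ_2, σ_2²) are non-degenerate Gaussian distributions on ℝ such that ∫_Q (F_1(u) − F_2(u))² du = 0, then μ_1 = μ_2 and σ_1 = σ_2. -/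
open MeasureTheory ProbabilityTheory NNReal

open Real Set

lemma pdf_shift_neg (μ : ℝ) {v : ℝ≥0} (hv : v ≠ 0) (x : ℝ) :
    Real.exp (-x) * gaussianPDFReal μ v x
      = Real.exp ((v:ℝ)/2 - μ) * gaussianPDFReal (μ - (v:ℝ)) v x := by
  have hv' : (v:ℝ) ≠ 0 := by exact_mod_cast hv
  unfold gaussianPDFReal
  rw [mul_left_comm, ← Real.exp_add, mul_left_comm, ← Real.exp_add]
  congr 1
  field_simp
  ring

lemma pdf_shift_pos (μ : ℝ) {v : ℝ≥0} (hv : v ≠ 0) (x : ℝ) :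
    Real.exp x * gaussianPDFReal μ v x
      = Real.exp ((v:ℝ)/2 + μ) * gaussianPDFReal (μ + (v:ℝ)) v x := by
  have hv' : (v:ℝ) ≠ 0 := by exact_mod_cast hv
  unfold gaussianPDFReal
  rw [mul_left_comm, ← Real.exp_add, mul_left_comm, ← Real.exp_add]
  congr 1
  field_simp
  ring

lemma tail_Iic_le (μ : ℝ) {v : ℝ≥0} (hv : v ≠ 0) (u : ℝ) :
    ∫ x in Set.Iic u, gaussianPDFReal μ v x ≤ Real.exp ((v:ℝ)/2 - μ) * Real.exp u := by
  have hint : Integrable (fun x => Real.exp u *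
      (Real.exp ((v:ℝ)/2 - μ) * gaussianPDFReal (μ - (v:ℝ)) v x)) :=
    ((integrable_gaussianPDFReal _ _).const_mul _).const_mul _
  calc ∫ x in Set.Iic u, gaussianPDFReal μ v x
      ≤ ∫ x in Set.Iic u, Real.exp u *
          (Real.exp ((v:ℝ)/2 - μ) * gaussianPDFReal (μ - (v:ℝ)) v x) := by
        refine setIntegral_mono_on (integrable_gaussianPDFReal μ v).integrableOn
          hint.integrableOn measurableSet_Iic (fun x hx => ?_)
        rw [← pdf_shift_neg μ hv x, ← mul_assoc, ← Real.exp_add]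
        exact le_mul_of_one_le_left (gaussianPDFReal_nonneg μ v x)
          (Real.one_le_exp (by simpa using hx))
    _ ≤ ∫ x, Real.exp u * (Real.exp ((v:ℝ)/2 - μ) * gaussianPDFReal (μ - (v:ℝ)) v x) := by
        refine setIntegral_le_integral hint (Filter.Eventually.of_forall fun x => ?_)
        exact mul_nonneg (Real.exp_pos _).le
          (mul_nonneg (Real.exp_pos _).le (gaussianPDFReal_nonneg _ _ _))
    _ = Real.exp ((v:ℝ)/2 - μ) * Real.exp u := by
        rw [integral_const_mul, integral_const_mul, integral_gaussianPDFReal_eq_one _ hv]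
        ring

lemma tail_Ioi_le (μ : ℝ) {v : ℝ≥0} (hv : v ≠ 0) (u : ℝ) :
    ∫ x in Set.Ioi u, gaussianPDFReal μ v x ≤ Real.exp ((v:ℝ)/2 + μ) * Real.exp (-u) := by
  have hint : Integrable (fun x => Real.exp (-u) *
      (Real.exp ((v:ℝ)/2 + μ) * gaussianPDFReal (μ + (v:ℝ)) v x)) :=
    ((integrable_gaussianPDFReal _ _).const_mul _).const_mul _
  calc ∫ x in Set.Ioi u, gaussianPDFReal μ v x
      ≤ ∫ x in Set.Ioi u, Real.exp (-u) *
          (Real.exp ((v:ℝ)/2 + μ) * gaussianPDFReal (μ + (v:ℝ)) v x) := by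
        refine setIntegral_mono_on (integrable_gaussianPDFReal μ v).integrableOn
          hint.integrableOn measurableSet_Ioi (fun x hx => ?_)
        rw [← pdf_shift_pos μ hv x, ← mul_assoc, ← Real.exp_add]
        refine le_mul_of_one_le_left (gaussianPDFReal_nonneg μ v x)
          (Real.one_le_exp ?_)
        have : u < x := hx
        linarith
    _ ≤ ∫ x, Real.exp (-u) * (Real.exp ((v:ℝ)/2 + μ) * gaussianPDFReal (μ + (v:ℝ)) v x) := by
        refine setIntegral_le_integral hint (Filter.Eventually.of_forall fun x => ?_)
        exact mul_nonneg (Real.exp_pos _).le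
          (mul_nonneg (Real.exp_pos _).le (gaussianPDFReal_nonneg _ _ _))
    _ = Real.exp ((v:ℝ)/2 + μ) * Real.exp (-u) := by
        rw [integral_const_mul, integral_const_mul, integral_gaussianPDFReal_eq_one _ hv]
        ring


noncomputable def Gcdf (μ : ℝ) (v : ℝ≥0) (t : ℝ) : ℝ := ∫ x in Set.Iic t, gaussianPDFReal μ v x

lemma Gcdf_nonneg (μ : ℝ) (v : ℝ≥0) (t : ℝ) : 0 ≤ Gcdf μ v t :=
  setIntegral_nonneg measurableSet_Iic fun x _ => gaussianPDFReal_nonneg μ v x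

lemma cdf_eq (μ : ℝ) {v : ℝ≥0} (hv : v ≠ 0) (u : ℝ) :
    (gaussianReal μ v (Set.Iic u)).toReal = Gcdf μ v u := by
  rw [gaussianReal_apply_eq_integral μ hv, ENNReal.toReal_ofReal
    (setIntegral_nonneg measurableSet_Iic fun x _ => gaussianPDFReal_nonneg μ v x)]
  rfl

lemma hasDeriv_cdf (μ : ℝ) (v : ℝ≥0) (u : ℝ) :
    HasDerivAt (Gcdf μ v) (gaussianPDFReal μ v u) u := by
  have hcont : Continuous (gaussianPDFReal μ v) := by
    unfold gaussianPDFReal; fun_prop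
  have hint := integrable_gaussianPDFReal μ v
  have key : Gcdf μ v
      = fun t => (∫ x in Set.Iic 0, gaussianPDFReal μ v x)
        + ∫ x in (0:ℝ)..t, gaussianPDFReal μ v x := by
    funext t
    have := intervalIntegral.integral_Iic_sub_Iic hint.integrableOn hint.integrableOn
      (a := 0) (b := t)
    unfold Gcdf
    linarith
  rw [key]
  exact (intervalIntegral.integral_hasDerivAt_right hint.intervalIntegrable
    ⟨Set.univ, Filter.univ_mem, hcont.aestronglyMeasurable.restrict⟩
    hcont.continuousAt).const_add _

lemma continuous_Gcdf (μ : ℝ) (v : ℝ≥0) : Continuous (Gcdf μ v) :=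
  continuous_iff_continuousAt.mpr fun u => (hasDeriv_cdf μ v u).continuousAt

lemma one_sub_Gcdf (μ : ℝ) {v : ℝ≥0} (hv : v ≠ 0) (u : ℝ) :
    1 - Gcdf μ v u = ∫ x in Set.Ioi u, gaussianPDFReal μ v x := by
  have h := MeasureTheory.integral_add_compl (measurableSet_Iic (a := u))
    (integrable_gaussianPDFReal μ v)
  rw [Set.compl_Iic, integral_gaussianPDFReal_eq_one μ hv] at h
  unfold Gcdf
  linarith

lemma one_sub_Gcdf_nonneg (μ : ℝ) {v : ℝ≥0} (hv : v ≠ 0) (u : ℝ) :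
    0 ≤ 1 - Gcdf μ v u := by
  rw [one_sub_Gcdf μ hv u]
  exact setIntegral_nonneg measurableSet_Ioi fun x _ => gaussianPDFReal_nonneg μ v x

lemma one_sub_Gcdf_le (μ : ℝ) {v : ℝ≥0} (hv : v ≠ 0) (u : ℝ) :
    1 - Gcdf μ v u ≤ Real.exp ((v:ℝ)/2 + μ) * Real.exp (-u) := by
  rw [one_sub_Gcdf μ hv u]
  exact tail_Ioi_le μ hv u

lemma Gcdf_le (μ : ℝ) {v : ℝ≥0} (hv : v ≠ 0) (u : ℝ) :
    Gcdf μ v u ≤ Real.exp ((v:ℝ)/2 - μ) * Real.exp u :=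
  tail_Iic_le μ hv u

lemma integrable_sq_diff (μ₁ μ₂ : ℝ) {v₁ v₂ : ℝ≥0} (h1 : v₁ ≠ 0) (h2 : v₂ ≠ 0) :
    Integrable (fun u => (Gcdf μ₁ v₁ u - Gcdf μ₂ v₂ u)^2) := by
  have hfc : Continuous (fun u => (Gcdf μ₁ v₁ u - Gcdf μ₂ v₂ u)^2) :=
    ((continuous_Gcdf μ₁ v₁).sub (continuous_Gcdf μ₂ v₂)).pow 2
  rw [← integrableOn_univ, ← Set.Iic_union_Ioi (a := (0:ℝ)), integrableOn_union]
  constructor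
  · set A := Real.exp ((v₁:ℝ)/2 - μ₁) with hA
    set B := Real.exp ((v₂:ℝ)/2 - μ₂) with hB
    refine Integrable.mono' ((integrableOn_exp_Iic 0).const_mul ((A+B)^2))
      hfc.aestronglyMeasurable.restrict ?_
    refine (ae_restrict_iff' measurableSet_Iic).mpr (Filter.Eventually.of_forall fun u hu => ?_)
    have hu0 : u ≤ 0 := hu
    have ha := Gcdf_nonneg μ₁ v₁ u
    have hb := Gcdf_nonneg μ₂ v₂ u
    have t₁ := Gcdf_le μ₁ h1 u
    have t₂ := Gcdf_le μ₂ h2 u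
    have hE0 : (0:ℝ) < Real.exp u := Real.exp_pos u
    have hE1 : Real.exp u ≤ 1 := Real.exp_le_one_iff.mpr hu0
    have hA0 : (0:ℝ) < A := Real.exp_pos _
    have hB0 : (0:ℝ) < B := Real.exp_pos _
    rw [Real.norm_eq_abs, abs_of_nonneg (sq_nonneg _)]
    have h1' : (Gcdf μ₁ v₁ u - Gcdf μ₂ v₂ u)^2 ≤ (Gcdf μ₁ v₁ u + Gcdf μ₂ v₂ u)^2 := by
      nlinarith [mul_nonneg ha hb]
    have h2' : (Gcdf μ₁ v₁ u + Gcdf μ₂ v₂ u)^2 ≤ ((A+B) * Real.exp u)^2 := by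
      refine pow_le_pow_left₀ (by linarith) (by nlinarith) 2
    have hEE : Real.exp u * Real.exp u ≤ Real.exp u := by nlinarith
    have h3' : ((A+B) * Real.exp u)^2 ≤ (A+B)^2 * Real.exp u := by
      nlinarith [mul_nonneg (sq_nonneg (A+B)) (sub_nonneg.mpr hEE)]
    linarith
  · set A := Real.exp ((v₁:ℝ)/2 + μ₁) with hA
    set B := Real.exp ((v₂:ℝ)/2 + μ₂) with hB
    refine Integrable.mono' ((exp_neg_integrableOn_Ioi 0 one_pos).const_mul ((A+B)^2))
      hfc.aestronglyMeasurable.restrict ?_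
    refine (ae_restrict_iff' measurableSet_Ioi).mpr (Filter.Eventually.of_forall fun u hu => ?_)
    have hu0 : (0:ℝ) < u := hu
    have ha := one_sub_Gcdf_nonneg μ₁ h1 u
    have hb := one_sub_Gcdf_nonneg μ₂ h2 u
    have t₁ := one_sub_Gcdf_le μ₁ h1 u
    have t₂ := one_sub_Gcdf_le μ₂ h2 u
    have hE0 : (0:ℝ) < Real.exp (-u) := Real.exp_pos _
    have hE1 : Real.exp (-u) ≤ 1 := Real.exp_le_one_iff.mpr (by linarith)
    have hA0 : (0:ℝ) < A := Real.exp_pos _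
    have hB0 : (0:ℝ) < B := Real.exp_pos _
    rw [Real.norm_eq_abs, abs_of_nonneg (sq_nonneg _)]
    have h1' : (Gcdf μ₁ v₁ u - Gcdf μ₂ v₂ u)^2
        ≤ ((1 - Gcdf μ₁ v₁ u) + (1 - Gcdf μ₂ v₂ u))^2 := by
      nlinarith [mul_nonneg ha hb]
    have h2' : ((1 - Gcdf μ₁ v₁ u) + (1 - Gcdf μ₂ v₂ u))^2 ≤ ((A+B) * Real.exp (-u))^2 := by
      refine pow_le_pow_left₀ (by linarith) (by nlinarith) 2
    have hEE : Real.exp (-u) * Real.exp (-u) ≤ Real.exp (-u) := by nlinarith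
    have h3' : ((A+B) * Real.exp (-u))^2 ≤ (A+B)^2 * Real.exp (-1 * u) := by
      rw [neg_one_mul]
      nlinarith [mul_nonneg (sq_nonneg (A+B)) (sub_nonneg.mpr hEE)]
    linarith


/-- strict propriety on Gaussians. If `Q ⊆ ℝ` is Borel with nonempty interior
and the cdfs of two non-degenerate Gaussians `N(μ₁,σ₁²)`, `N(μ₂,σ₂²)` satisfy
`∫_Q (F₁ − F₂)² = 0`, then `μ₁ = μ₂` and `σ₁ = σ₂`. -/
theorem stmt8 (Q : Set ℝ) (hQ : MeasurableSet Q) (hQi : (interior Q).Nonempty)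
    (μ₁ μ₂ : ℝ) (σ₁ σ₂ : ℝ≥0) (hσ₁ : 0 < σ₁) (hσ₂ : 0 < σ₂)
    (h : (∫ u in Q,
        ((gaussianReal μ₁ (σ₁ ^ 2) (Set.Iic u)).toReal
          - (gaussianReal μ₂ (σ₂ ^ 2) (Set.Iic u)).toReal) ^ 2) = 0) :
    μ₁ = μ₂ ∧ σ₁ = σ₂ := by
  have hv₁ : (σ₁^2 : ℝ≥0) ≠ 0 := pow_ne_zero 2 hσ₁.ne'
  have hv₂ : (σ₂^2 : ℝ≥0) ≠ 0 := pow_ne_zero 2 hσ₂.ne'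
  simp_rw [cdf_eq μ₁ hv₁, cdf_eq μ₂ hv₂] at h
  set f : ℝ → ℝ := fun u => (Gcdf μ₁ (σ₁^2) u - Gcdf μ₂ (σ₂^2) u)^2 with hf
  have hfc : Continuous f :=
    ((continuous_Gcdf _ _).sub (continuous_Gcdf _ _)).pow 2
  have hint : Integrable f := integrable_sq_diff μ₁ μ₂ hv₁ hv₂
  have hae : f =ᵐ[volume.restrict Q] 0 :=
    (MeasureTheory.setIntegral_eq_zero_iff_of_nonneg_ae
      (Filter.Eventually.of_forall fun u => sq_nonneg _) hint.integrableOn).mp h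
  have hzero : Set.EqOn f 0 (interior Q) :=
    MeasureTheory.Measure.eqOn_of_ae_eq
      (MeasureTheory.ae_restrict_of_ae_restrict_of_subset interior_subset hae)
      hfc.continuousOn continuousOn_const
      (by rw [isOpen_interior.interior_eq]; exact subset_closure)
  obtain ⟨x₀, hx₀⟩ := hQi
  obtain ⟨ε, hε, hball⟩ := Metric.isOpen_iff.mp isOpen_interior x₀ hx₀
  have hmem : ∀ y : ℝ, |y - x₀| < ε → y ∈ interior Q := fun y hy =>
    hball (by simpa [Metric.mem_ball, Real.dist_eq] using hy)
  have hGeq : ∀ y : ℝ, |y - x₀| < ε → Gcdf μ₁ (σ₁^2) y = Gcdf μ₂ (σ₂^2) y := by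
    intro y hy
    have h0 := hzero (hmem y hy)
    simp only [hf, Pi.zero_apply] at h0
    have := pow_eq_zero_iff (n := 2) (by norm_num) |>.mp h0
    linarith
  have hpdf : ∀ y : ℝ, |y - x₀| < ε →
      gaussianPDFReal μ₁ (σ₁^2) y = gaussianPDFReal μ₂ (σ₂^2) y := by
    intro y hy
    have h1 := hasDeriv_cdf μ₁ (σ₁^2) y
    have h2 := hasDeriv_cdf μ₂ (σ₂^2) y
    have hev : Gcdf μ₂ (σ₂^2) =ᶠ[nhds y] Gcdf μ₁ (σ₁^2) := by
      have hmemb : Metric.ball x₀ ε ∈ nhds y :=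
        Metric.isOpen_ball.mem_nhds (by simpa [Metric.mem_ball, Real.dist_eq] using hy)
      filter_upwards [hmemb] with z hz
      exact (hGeq z (by simpa [Metric.mem_ball, Real.dist_eq] using hz)).symm
    exact HasDerivAt.unique (h1.congr_of_eventuallyEq hev) h2
  -- turn pdf equality into log equations
  have hp : (0:ℝ) < (σ₁:ℝ)^2 := by positivity
  have hq : (0:ℝ) < (σ₂:ℝ)^2 := by positivity
  have hlog : ∀ y : ℝ, |y - x₀| < ε →
      Real.log ((Real.sqrt (2 * Real.pi * (σ₁:ℝ)^2))⁻¹) + -(y - μ₁)^2 / (2 * (σ₁:ℝ)^2)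
        = Real.log ((Real.sqrt (2 * Real.pi * (σ₂:ℝ)^2))⁻¹) + -(y - μ₂)^2 / (2 * (σ₂:ℝ)^2) := by
    intro y hy
    have he := hpdf y hy
    unfold gaussianPDFReal at he
    push_cast at he
    have hl := congrArg Real.log he
    rw [Real.log_mul (by positivity) (Real.exp_ne_zero _),
      Real.log_mul (by positivity) (Real.exp_ne_zero _),
      Real.log_exp, Real.log_exp] at hl
    exact hl
  have hy₁ : |x₀ - ε/2 - x₀| < ε := by
    rw [show x₀ - ε/2 - x₀ = -(ε/2) by ring, abs_neg, abs_of_pos (by linarith)]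
    linarith
  have hy₂ : |x₀ - x₀| < ε := by simpa using hε
  have hy₃ : |x₀ + ε/2 - x₀| < ε := by
    rw [show x₀ + ε/2 - x₀ = ε/2 by ring, abs_of_pos (by linarith)]
    linarith
  have e₁ := hlog _ hy₁
  have e₂ := hlog _ hy₂
  have e₃ := hlog _ hy₃
  have d₁ : ((x₀-μ₁)^2 - (x₀-ε/2-μ₁)^2)/(2*(σ₁:ℝ)^2)
      = ((x₀-μ₂)^2 - (x₀-ε/2-μ₂)^2)/(2*(σ₂:ℝ)^2) := by
    linear_combination e₁ - e₂
  have d₂ : ((x₀+ε/2-μ₁)^2 - (x₀-μ₁)^2)/(2*(σ₁:ℝ)^2)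
      = ((x₀+ε/2-μ₂)^2 - (x₀-μ₂)^2)/(2*(σ₂:ℝ)^2) := by
    linear_combination e₂ - e₃
  have d₁' : ((x₀-μ₁)^2 - (x₀-ε/2-μ₁)^2) * (2*(σ₂:ℝ)^2)
      = ((x₀-μ₂)^2 - (x₀-ε/2-μ₂)^2) * (2*(σ₁:ℝ)^2) :=
    (div_eq_div_iff (by positivity) (by positivity)).mp d₁
  have d₂' : ((x₀+ε/2-μ₁)^2 - (x₀-μ₁)^2) * (2*(σ₂:ℝ)^2)
      = ((x₀+ε/2-μ₂)^2 - (x₀-μ₂)^2) * (2*(σ₁:ℝ)^2) :=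
    (div_eq_div_iff (by positivity) (by positivity)).mp d₂
  have hpq : ε^2 * (σ₂:ℝ)^2 = ε^2 * (σ₁:ℝ)^2 := by linear_combination d₂' - d₁'
  have hqp : (σ₂:ℝ)^2 = (σ₁:ℝ)^2 := mul_left_cancel₀ (pow_ne_zero 2 hε.ne') hpq
  have hμ : μ₁ = μ₂ := by
    rw [hqp] at d₁'
    have h2 : ε * (2*(σ₁:ℝ)^2) * μ₂ = ε * (2*(σ₁:ℝ)^2) * μ₁ := by linear_combination d₁'
    exact (mul_left_cancel₀ (by positivity) h2).symm
  refine ⟨hμ, ?_⟩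
  have hσ : (σ₁:ℝ) = (σ₂:ℝ) := by
    have h1 : (σ₁:ℝ) = Real.sqrt ((σ₁:ℝ)^2) := (Real.sqrt_sq σ₁.coe_nonneg).symm
    have h2 : (σ₂:ℝ) = Real.sqrt ((σ₂:ℝ)^2) := (Real.sqrt_sq σ₂.coe_nonneg).symm
    rw [h1, h2, hqp]
  exact NNReal.coe_injective hσ
end

section
/- The function γ : ℝ × [0,∞) → ℝ defined by γ(z, s) = √s·φ(z/√s) + z·Φ(z/√s) for s > 0 and γ(z, 0) = max(z, 0) is continuous on ℝ × [0,∞), satisfies γ(z, s) > 0 whenever s > 0, and is non-decreasing in each of its two arguments. -/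
open MeasureTheory ProbabilityTheory

noncomputable def stdGaussCdf' (t : ℝ) : ℝ := (gaussianReal 0 1 (Set.Iic t)).toReal

noncomputable def stdGaussPdf' (t : ℝ) : ℝ :=
  (Real.sqrt (2 * Real.pi))⁻¹ * Real.exp (-t ^ 2 / 2)

/-- The expected-improvement function `γ(z,s)`. -/
noncomputable def eiGamma (z s : ℝ) : ℝ :=
  if s = 0 then max z 0
  else Real.sqrt s * stdGaussPdf' (z / Real.sqrt s) + z * stdGaussCdf' (z / Real.sqrt s)

/-!
Put `g u = φ u + u Φ u`, so that `γ(z, s) = √s · g (z / √s)` for `s > 0`. Since `g' = Φ > 0`, `g` is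
strictly increasing, and the perspective `r ↦ r · g (z / r)` has derivative `φ (z / r) > 0`.
Mills' inequality `-u Φ u ≤ φ u` says `g ≥ 0`, and the symmetry `g (-u) = g u - u` then gives
`max u 0 ≤ g u ≤ max u 0 + φ 0`. Scaled by `√s`, this squeezes `γ(z, s)` onto `max z 0` as `s → 0`.
-/

open Real Set Filter Topology

lemma gaussianPDFReal_zero_one : gaussianPDFReal 0 1 = stdGaussPdf' := by
  ext x
  simp [gaussianPDFReal, stdGaussPdf']

lemma stdGaussPdf'_pos (t : ℝ) : 0 < stdGaussPdf' t := by
  rw [← gaussianPDFReal_zero_one]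
  exact gaussianPDFReal_pos 0 1 t one_ne_zero

lemma integrable_stdGaussPdf' : Integrable stdGaussPdf' := by
  rw [← gaussianPDFReal_zero_one]
  exact integrable_gaussianPDFReal 0 1

lemma continuous_stdGaussPdf' : Continuous stdGaussPdf' := by
  unfold stdGaussPdf'
  fun_prop

lemma stdGaussPdf'_neg (t : ℝ) : stdGaussPdf' (-t) = stdGaussPdf' t := by
  simp [stdGaussPdf']

lemma hasDerivAt_stdGaussPdf' (t : ℝ) : HasDerivAt stdGaussPdf' (-t * stdGaussPdf' t) t := by
  have h : HasDerivAt (fun x : ℝ => -x ^ 2 / 2) (-t) t := by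
    simpa using (((hasDerivAt_pow 2 t).neg).div_const 2).congr_deriv (by ring)
  exact ((h.exp).const_mul _).congr_deriv (by simp only [stdGaussPdf']; ring)

lemma tendsto_stdGaussPdf'_atBot : Tendsto stdGaussPdf' atBot (𝓝 0) := by
  have hsq : Tendsto (fun x : ℝ => x ^ 2) atBot atTop := by
    simpa [sq] using tendsto_id.atBot_mul_atBot₀ tendsto_id
  have hexp : Tendsto (fun x : ℝ => exp (-x ^ 2 / 2)) atBot (𝓝 0) :=
    tendsto_exp_comp_nhds_zero.2 ((tendsto_neg_atTop_atBot.comp hsq).atBot_div_const two_pos)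
  have h := hexp.const_mul (√(2 * π))⁻¹
  rw [mul_zero] at h
  exact h

lemma integrable_mul_stdGaussPdf' : Integrable fun x => x * stdGaussPdf' x := by
  have h := (integrable_mul_exp_neg_mul_sq (b := (1 : ℝ) / 2) (by norm_num)).const_mul
    (√(2 * π))⁻¹
  refine h.congr (Eventually.of_forall fun x => ?_)
  simp only [stdGaussPdf']
  ring_nf

lemma integral_Iic_mul_stdGaussPdf' (t : ℝ) :
    ∫ x in Iic t, x * stdGaussPdf' x = -stdGaussPdf' t := by
  have hderiv (x : ℝ) : HasDerivAt (-stdGaussPdf') (x * stdGaussPdf' x) x :=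
    (hasDerivAt_stdGaussPdf' x).neg.congr_deriv (by ring)
  simpa using integral_Iic_of_hasDerivAt_of_tendsto (hderiv t).continuousAt.continuousWithinAt
    (fun x _ => hderiv x) integrable_mul_stdGaussPdf'.integrableOn
    tendsto_stdGaussPdf'_atBot.neg

lemma stdGaussCdf'_eq_integral (t : ℝ) : stdGaussCdf' t = ∫ x in Iic t, stdGaussPdf' x := by
  rw [stdGaussCdf', gaussianReal_apply_eq_integral 0 one_ne_zero, gaussianPDFReal_zero_one,
    ENNReal.toReal_ofReal]
  exact setIntegral_nonneg measurableSet_Iic fun x _ => (stdGaussPdf'_pos x).le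

lemma stdGaussCdf'_pos (t : ℝ) : 0 < stdGaussCdf' t := by
  rw [stdGaussCdf'_eq_integral, setIntegral_pos_iff_support_of_nonneg_ae
    (Eventually.of_forall fun x => (stdGaussPdf'_pos x).le) integrable_stdGaussPdf'.integrableOn,
    Function.support_eq_univ fun x => (stdGaussPdf'_pos x).ne', univ_inter]
  simp

lemma stdGaussCdf'_neg (t : ℝ) : stdGaussCdf' (-t) = 1 - stdGaussCdf' t := by
  have htotal : ∫ x, stdGaussPdf' x = 1 := by
    rw [← gaussianPDFReal_zero_one]
    exact integral_gaussianPDFReal_eq_one 0 one_ne_zero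
  have hsplit := intervalIntegral.integral_Iic_add_Ioi (b := t)
    integrable_stdGaussPdf'.integrableOn integrable_stdGaussPdf'.integrableOn
  rw [stdGaussCdf'_eq_integral, stdGaussCdf'_eq_integral, ← integral_comp_neg_Ioi]
  simp only [stdGaussPdf'_neg]
  linarith

lemma hasDerivAt_stdGaussCdf' (t : ℝ) : HasDerivAt stdGaussCdf' (stdGaussPdf' t) t := by
  have hint : ∀ u, stdGaussCdf' u = stdGaussCdf' 0 + ∫ x in (0 : ℝ)..u, stdGaussPdf' x := by
    intro u
    rw [stdGaussCdf'_eq_integral, stdGaussCdf'_eq_integral,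
      ← intervalIntegral.integral_Iic_sub_Iic integrable_stdGaussPdf'.integrableOn
        integrable_stdGaussPdf'.integrableOn]
    ring
  rw [funext hint]
  exact (intervalIntegral.integral_hasDerivAt_right integrable_stdGaussPdf'.intervalIntegrable
    (continuous_stdGaussPdf'.stronglyMeasurableAtFilter _ _)
    continuous_stdGaussPdf'.continuousAt).const_add _

lemma neg_mul_stdGaussCdf'_le (t : ℝ) : -t * stdGaussCdf' t ≤ stdGaussPdf' t := by
  calc -t * stdGaussCdf' t = ∫ x in Iic t, -t * stdGaussPdf' x := by
        rw [stdGaussCdf'_eq_integral, integral_const_mul]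
    _ ≤ ∫ x in Iic t, -(x * stdGaussPdf' x) := by
        refine setIntegral_mono_on (integrable_stdGaussPdf'.const_mul _).integrableOn
          integrable_mul_stdGaussPdf'.neg.integrableOn measurableSet_Iic fun x hx => ?_
        nlinarith [stdGaussPdf'_pos x, mem_Iic.1 hx]
    _ = stdGaussPdf' t := by
        rw [integral_neg, integral_Iic_mul_stdGaussPdf', neg_neg]

noncomputable def eiStd (u : ℝ) : ℝ := stdGaussPdf' u + u * stdGaussCdf' u

lemma hasDerivAt_eiStd (u : ℝ) : HasDerivAt eiStd (stdGaussCdf' u) u :=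
  ((hasDerivAt_stdGaussPdf' u).add ((hasDerivAt_id u).mul (hasDerivAt_stdGaussCdf' u))).congr_deriv
    (by simp only [id]; ring)

lemma continuous_eiStd : Continuous eiStd :=
  continuous_iff_continuousAt.2 fun u => (hasDerivAt_eiStd u).continuousAt

lemma strictMono_eiStd : StrictMono eiStd :=
  strictMono_of_hasDerivAt_pos hasDerivAt_eiStd stdGaussCdf'_pos

lemma eiStd_neg (u : ℝ) : eiStd (-u) = eiStd u - u := by
  simp only [eiStd, stdGaussPdf'_neg, stdGaussCdf'_neg]
  ring

lemma eiStd_zero : eiStd 0 = stdGaussPdf' 0 := by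
  simp [eiStd]

lemma eiStd_nonneg (u : ℝ) : 0 ≤ eiStd u := by
  have := neg_mul_stdGaussCdf'_le u
  simp only [eiStd]
  linarith

lemma eiStd_pos (u : ℝ) : 0 < eiStd u :=
  (eiStd_nonneg (u - 1)).trans_lt (strictMono_eiStd (by linarith))

lemma max_le_eiStd (u : ℝ) : max u 0 ≤ eiStd u := by
  have hneg := eiStd_nonneg (-u)
  rw [eiStd_neg] at hneg
  exact max_le (by linarith) (eiStd_nonneg u)

lemma eiStd_le_max_add (u : ℝ) : eiStd u ≤ max u 0 + stdGaussPdf' 0 := by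
  rw [← eiStd_zero]
  rcases le_total u 0 with hu | hu
  · have := strictMono_eiStd.monotone hu
    simp only [max_eq_right hu]
    linarith
  · have := strictMono_eiStd.monotone (neg_nonpos.2 hu)
    rw [eiStd_neg] at this
    simp only [max_eq_left hu]
    linarith

lemma hasDerivAt_mul_eiStd_div (z : ℝ) {r : ℝ} (hr : r ≠ 0) :
    HasDerivAt (fun r => r * eiStd (z / r)) (stdGaussPdf' (z / r)) r := by
  have hquot : HasDerivAt (fun r => z / r) (-(z / r ^ 2)) r := by
    simpa [div_eq_mul_inv] using (hasDerivAt_inv hr).const_mul z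
  refine ((hasDerivAt_id r).mul ((hasDerivAt_eiStd (z / r)).comp r hquot)).congr_deriv ?_
  simp only [Function.comp_apply, eiStd, id]
  field_simp
  ring

lemma monotoneOn_mul_eiStd_div (z : ℝ) : MonotoneOn (fun r => r * eiStd (z / r)) (Ioi 0) := by
  refine monotoneOn_of_hasDerivWithinAt_nonneg (convex_Ioi 0) (fun r hr => ?_) (fun r hr => ?_)
    fun r _ => (stdGaussPdf'_pos (z / r)).le
  · exact (hasDerivAt_mul_eiStd_div z (ne_of_gt hr)).continuousAt.continuousWithinAt
  · rw [interior_Ioi] at hr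
    exact (hasDerivAt_mul_eiStd_div z (ne_of_gt hr)).hasDerivWithinAt

lemma eiGamma_zero_right (z : ℝ) : eiGamma z 0 = max z 0 := if_pos rfl

lemma eiGamma_of_pos (z : ℝ) {s : ℝ} (hs : 0 < s) :
    eiGamma z s = √s * eiStd (z / √s) := by
  have : √s ≠ 0 := by positivity
  rw [eiGamma, if_neg hs.ne', eiStd]
  field_simp

lemma max_le_eiGamma (z : ℝ) {s : ℝ} (hs : 0 ≤ s) : max z 0 ≤ eiGamma z s := by
  rcases hs.eq_or_lt with rfl | hs
  · exact (eiGamma_zero_right z).ge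
  have hsqrt : 0 < √s := sqrt_pos.2 hs
  calc max z 0 = √s * max (z / √s) 0 := by
        rw [mul_max_of_nonneg _ _ hsqrt.le, mul_div_cancel₀ _ hsqrt.ne', mul_zero]
    _ ≤ eiGamma z s := by
        rw [eiGamma_of_pos z hs]
        exact mul_le_mul_of_nonneg_left (max_le_eiStd _) hsqrt.le

lemma eiGamma_le_max_add (z : ℝ) {s : ℝ} (hs : 0 ≤ s) :
    eiGamma z s ≤ max z 0 + √s * stdGaussPdf' 0 := by
  rcases hs.eq_or_lt with rfl | hs
  · simp [eiGamma_zero_right]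
  have hsqrt : 0 < √s := sqrt_pos.2 hs
  calc eiGamma z s ≤ √s * (max (z / √s) 0 + stdGaussPdf' 0) := by
        rw [eiGamma_of_pos z hs]
        exact mul_le_mul_of_nonneg_left (eiStd_le_max_add _) hsqrt.le
    _ = max z 0 + √s * stdGaussPdf' 0 := by
        rw [mul_add, mul_max_of_nonneg _ _ hsqrt.le, mul_div_cancel₀ _ hsqrt.ne', mul_zero]

lemma eiGamma_pos (z : ℝ) {s : ℝ} (hs : 0 < s) : 0 < eiGamma z s := by
  rw [eiGamma_of_pos z hs]
  exact mul_pos (sqrt_pos.2 hs) (eiStd_pos _)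

lemma monotone_eiGamma_left {s : ℝ} (hs : 0 ≤ s) : Monotone fun z => eiGamma z s := by
  rcases hs.eq_or_lt with rfl | hs
  all_goals intro a b hab
  · simpa only [eiGamma_zero_right] using max_le_max hab le_rfl
  simp only [eiGamma_of_pos _ hs]
  gcongr
  exact strictMono_eiStd.monotone (by gcongr)

lemma monotoneOn_eiGamma_right (z : ℝ) : MonotoneOn (eiGamma z) (Ici 0) := by
  intro a ha b hb hab
  rcases (mem_Ici.1 ha).eq_or_lt with rfl | ha
  · rw [eiGamma_zero_right]
    exact max_le_eiGamma z hb
  have hb : 0 < b := ha.trans_le hab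
  rw [eiGamma_of_pos z ha, eiGamma_of_pos z hb]
  exact monotoneOn_mul_eiStd_div z (sqrt_pos.2 ha) (sqrt_pos.2 hb) (sqrt_le_sqrt hab)

lemma continuousAt_eiGamma_of_pos {p : ℝ × ℝ} (hp : 0 < p.2) :
    ContinuousAt (fun q : ℝ × ℝ => eiGamma q.1 q.2) p := by
  have hsqrt : ContinuousAt (fun q : ℝ × ℝ => √q.2) p := by fun_prop
  have hF : ContinuousAt (fun q : ℝ × ℝ => √q.2 * eiStd (q.1 / √q.2)) p :=
    hsqrt.mul (continuous_eiStd.continuousAt.comp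
      (continuous_fst.continuousAt.div hsqrt (sqrt_pos.2 hp).ne'))
  refine hF.congr ?_
  filter_upwards [(isOpen_lt continuous_const continuous_snd).mem_nhds hp] with q hq
  exact (eiGamma_of_pos q.1 hq).symm

lemma continuousWithinAt_eiGamma_of_eq_zero {p : ℝ × ℝ} (hp : p.2 = 0) :
    ContinuousWithinAt (fun q : ℝ × ℝ => eiGamma q.1 q.2) (univ ×ˢ Ici 0) p := by
  have hlow : Continuous fun q : ℝ × ℝ => max q.1 0 := by fun_prop
  have hup : Tendsto (fun q : ℝ × ℝ => max q.1 0 + √q.2 * stdGaussPdf' 0)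
      (𝓝[univ ×ˢ Ici 0] p) (𝓝 (max p.1 0)) := by
    have hcont : Continuous fun q : ℝ × ℝ => max q.1 0 + √q.2 * stdGaussPdf' 0 := by fun_prop
    simpa [hp] using (hcont.continuousWithinAt (s := univ ×ˢ Ici 0) (x := p)).tendsto
  rw [ContinuousWithinAt, hp, eiGamma_zero_right]
  refine tendsto_of_tendsto_of_tendsto_of_le_of_le' hlow.continuousWithinAt hup ?_ ?_
  all_goals filter_upwards [self_mem_nhdsWithin] with q hq
  · exact max_le_eiGamma q.1 hq.2
  · exact eiGamma_le_max_add q.1 hq.2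

/-- `γ` is continuous on `ℝ × [0,∞)`, positive whenever `s > 0`, and
non-decreasing in each argument. -/
theorem stmt11 :
    ContinuousOn (fun p : ℝ × ℝ => eiGamma p.1 p.2) (Set.univ ×ˢ Set.Ici 0) ∧
    (∀ z s : ℝ, 0 < s → 0 < eiGamma z s) ∧
    (∀ s : ℝ, 0 ≤ s → Monotone fun z => eiGamma z s) ∧
    (∀ z : ℝ, MonotoneOn (eiGamma z) (Set.Ici 0)) := by
  refine ⟨fun p hp => ?_, fun z s hs => eiGamma_pos z hs, fun s hs => monotone_eiGamma_left hs,
    monotoneOn_eiGamma_right⟩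
  rcases (mem_Ici.1 hp.2).eq_or_lt with hp0 | hp0
  · exact continuousWithinAt_eiGamma_of_eq_zero hp0.symm
  · exact (continuousAt_eiGamma_of_pos hp0).continuousWithinAt
end
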